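/- arXiv:2001.10747 — 2 statements merged into one kernel-verified Lean document; each statement's English description precedes it below -/
import Mathlib

section
/- Let R be a commutative ring and S a multiplicative subset of R. If the localisation R[S⁻¹] admits a 𝒫₁(R)-cover, then the projective dimension of R[S⁻¹] as an R-module is at most 1. -/
universe u

open MulOpposite Function

/-- An `A`-module `M` has projective dimension at most 1, i.e. there is a short exact
sequence `0 → ker g → P → M → 0` with `P` and `ker g` projective. -/
def ProjDimLE1 (A : Type u) [Ring A] (M : Type u) [AddCommGroup M] [Module A M] : Prop :=
  ∃ (P : ModuleCat.{u} A) (g : P →ₗ[A] M), Module.Projective A P ∧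
    Function.Surjective g ∧ Module.Projective A (LinearMap.ker g)

/-- `Ext¹_A(X, Y) = 0`: every short exact sequence `0 → Y → E → X → 0` splits. -/
def Ext1Vanishes (A : Type u) [Ring A] (X Y : Type u) [AddCommGroup X] [Module A X]
    [AddCommGroup Y] [Module A Y] : Prop :=
  ∀ (E : Type u) [AddCommGroup E] [Module A E], ∀ (i : Y →ₗ[A] E) (p : E →ₗ[A] X),
    Function.Injective i → Function.Surjective p → LinearMap.range i = LinearMap.ker p →
    ∃ s : X →ₗ[A] E, p.comp s = LinearMap.id

/-- `φ : P → M` is a `C`-cover of `M`: `P ∈ C`, every map from a module of `C` to `M`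
factors through `φ`, and every endomorphism `e` of `P` with `φ ∘ e = φ` is an automorphism. -/
def IsCover (A : Type u) [Ring A] (C : Set (ModuleCat.{u} A)) (P : ModuleCat.{u} A)
    (M : Type u) [AddCommGroup M] [Module A M] (φ : P →ₗ[A] M) : Prop :=
  P ∈ C ∧
  (∀ P' ∈ C, ∀ ψ : (P' : Type u) →ₗ[A] M, ∃ h : (P' : Type u) →ₗ[A] (P : Type u),
    φ.comp h = ψ) ∧
  (∀ e : (P : Type u) →ₗ[A] (P : Type u), φ.comp e = φ → Function.Bijective e)

/-- The class `C` is covering: every `A`-module admits a `C`-cover. -/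
def IsCoveringClass (A : Type u) [Ring A] (C : Set (ModuleCat.{u} A)) : Prop :=
  ∀ M : ModuleCat.{u} A, ∃ (P : ModuleCat.{u} A) (φ : P →ₗ[A] (M : Type u)),
    IsCover A C P (M : Type u) φ

/-- The class `𝒫₁(A)` of modules of projective dimension at most one. -/
def P1Class (A : Type u) [Ring A] : Set (ModuleCat.{u} A) := {M | ProjDimLE1 A M}

/-! Let `φ : P → S⁻¹R` be a `𝒫₁(R)`-cover. Every `s ∈ S` acts invertibly on `P`: lifting
`s⁻¹ ∘ φ` through `φ` gives `f` with `φ ∘ (s • f) = φ`, so `s • f` is an automorphism of `P`.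
Hence `P` is an `S⁻¹R`-module, and the lift of `R → S⁻¹R` through `φ` extends to a section
`σ` of `φ`. Then `σ ∘ φ` fixes `φ`, so it is an automorphism, `φ` is an isomorphism, and
`S⁻¹R ≅ P ∈ 𝒫₁(R)`. -/

section

variable {A : Type u} [Ring A]

theorem ProjDimLE1.of_projective (M : Type u) [AddCommGroup M] [Module A M]
    [Module.Projective A M] : ProjDimLE1 A M := by
  refine ⟨ModuleCat.of A M, LinearMap.id, ‹_›, surjective_id, ?_⟩
  rw [LinearMap.ker_id]
  infer_instance

theorem ProjDimLE1.of_linearEquiv {M N : Type u} [AddCommGroup M] [Module A M]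
    [AddCommGroup N] [Module A N] (e : M ≃ₗ[A] N) (hM : ProjDimLE1 A M) : ProjDimLE1 A N := by
  obtain ⟨Q, g, hQ, hg, hker⟩ := hM
  refine ⟨Q, (e : M →ₗ[A] N) ∘ₗ g, hQ, e.surjective.comp hg, ?_⟩
  rwa [LinearEquiv.ker_comp]

theorem IsCover.bijective_of_comp_eq_id {C : Set (ModuleCat.{u} A)} {P : ModuleCat.{u} A}
    {M : Type u} [AddCommGroup M] [Module A M] {φ : P →ₗ[A] M} (hφ : IsCover A C P M φ)
    {σ : M →ₗ[A] P} (hσ : φ ∘ₗ σ = LinearMap.id) : Bijective φ := by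
  have hσφ : Bijective (σ ∘ₗ φ) :=
    hφ.2.2 _ (by rw [← LinearMap.comp_assoc, hσ, LinearMap.id_comp])
  exact ⟨.of_comp hσφ.injective, RightInverse.surjective (LinearMap.congr_fun hσ)⟩

end

section

variable {R : Type u} [CommRing R] {C : Set (ModuleCat.{u} R)} {P : ModuleCat.{u} R}
  {M : Type u} [AddCommGroup M] [Module R M] {φ : P →ₗ[R] M}

theorem IsCover.isUnit_algebraMap_end (hφ : IsCover R C P M φ) {r : R}
    (hr : IsUnit (algebraMap R (Module.End R M) r)) :
    IsUnit (algebraMap R (Module.End R P) r) := by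
  obtain ⟨f, hf⟩ := hφ.2.1 P hφ.1 ((↑hr.unit⁻¹ : Module.End R M) ∘ₗ φ)
  have hφ_fix : φ ∘ₗ (r • f) = φ := by
    rw [LinearMap.comp_smul, hf, ← LinearMap.smul_comp, Algebra.smul_def, hr.mul_val_inv,
      Module.End.one_eq_id, LinearMap.id_comp]
  have hunit : IsUnit (algebraMap R (Module.End R P) r * f) := by
    rw [← Algebra.smul_def, Module.End.isUnit_iff]
    exact hφ.2.2 _ hφ_fix
  exact ((Algebra.commute_algebraMap_left r f).isUnit_mul_iff.mp hunit).1

theorem IsCover.bijective_of_isLocalizedModule (hφ : IsCover R C P M φ) (S : Submonoid R)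
    {N : ModuleCat.{u} R} (hN : N ∈ C) (f : N →ₗ[R] M) [IsLocalizedModule S f] :
    Bijective φ := by
  have hM : ∀ s : S, IsUnit (algebraMap R (Module.End R M) s) := IsLocalizedModule.map_units f
  obtain ⟨g, hg⟩ := hφ.2.1 N hN f
  let σ : M →ₗ[R] P := IsLocalizedModule.lift S f g fun s ↦ hφ.isUnit_algebraMap_end (hM s)
  refine hφ.bijective_of_comp_eq_id (σ := σ) (IsLocalizedModule.ext S f hM ?_)
  rw [LinearMap.comp_assoc, IsLocalizedModule.lift_comp, hg, LinearMap.id_comp]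

end

/-- **Lemma 5.2(i).** Let `R` be a commutative ring and `S` a multiplicative subset of
`R`. If the localisation `R[S⁻¹]` has a `𝒫₁(R)`-cover, then `p.dim_R R[S⁻¹] ≤ 1`. -/
theorem pd_le_one_of_localization_has_P1_cover (R : Type u) [CommRing R] (S : Submonoid R)
    (h : ∃ (P : ModuleCat.{u} R) (φ : (P : Type u) →ₗ[R] Localization S),
      IsCover R (P1Class R) P (Localization S) φ) :
    ProjDimLE1 R (Localization S) := by
  obtain ⟨P, φ, hφ⟩ := h
  have hR : ModuleCat.of R R ∈ P1Class R := ProjDimLE1.of_projective R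
  have hφ_bij : Bijective φ :=
    hφ.bijective_of_isLocalizedModule S hR (Algebra.linearMap R (Localization S))
  exact (hφ.1 : ProjDimLE1 R P).of_linearEquiv (LinearEquiv.ofBijective φ hφ_bij)
end

section
/- Let R be a commutative ring, S a multiplicative subset of R, and M an R-module of projective dimension at most 1. If M ⊗_R R[S⁻¹] admits a 𝒫₁(R)-cover, then the projective dimension of M ⊗_R R[S⁻¹] as an R-module is at most 1. -/
universe u

open MulOpposite Function

/-! Every `s ∈ S` acts invertibly on the cover `φ : P → M ⊗ S⁻¹R`: lifting `s⁻¹ ∘ φ` along `φ`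
gives `g` with `φ ∘ (s • g) = φ`, so `s • g`, and with it `s`, is an automorphism of `P`.
Since `M ∈ 𝒫₁(R)`, the localization map `M → M ⊗ S⁻¹R` factors through `φ`, and by the
universal property of localization this factorisation extends to a section of `φ`. Thus
`M ⊗ S⁻¹R` is a direct summand of `P ∈ 𝒫₁(R)`, and `𝒫₁(R)` is closed under direct summands
by Schanuel's lemma. -/

section Ring

variable {R : Type u} [Ring R]

/-- Schanuel's lemma: `ker g₁` is a retract of `ker g₂ × F₁`. -/
theorem Module.Projective.ker_of_surjective_of_ker {F₁ F₂ X : Type*} [AddCommGroup F₁]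
    [Module R F₁] [AddCommGroup F₂] [Module R F₂] [AddCommGroup X] [Module R X]
    [Module.Projective R F₁] [Module.Projective R F₂]
    (g₁ : F₁ →ₗ[R] X) (g₂ : F₂ →ₗ[R] X) (hg₁ : Surjective g₁) (hg₂ : Surjective g₂)
    [Module.Projective R (LinearMap.ker g₂)] :
    Module.Projective R (LinearMap.ker g₁) := by
  obtain ⟨h₁, hh₁⟩ := Module.projective_lifting_property g₂ g₁ hg₂
  obtain ⟨h₂, hh₂⟩ := Module.projective_lifting_property g₁ g₂ hg₁
  have hh₁' (a : F₁) : g₂ (h₁ a) = g₁ a := LinearMap.congr_fun hh₁ a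
  have hh₂' (b : F₂) : g₁ (h₂ b) = g₂ b := LinearMap.congr_fun hh₂ b
  let i : LinearMap.ker g₁ →ₗ[R] LinearMap.ker g₂ × F₁ :=
    (h₁.restrict fun a ha => by simpa [hh₁'] using ha).prod (LinearMap.ker g₁).subtype
  let r : LinearMap.ker g₂ × F₁ →ₗ[R] LinearMap.ker g₁ :=
    LinearMap.codRestrict _ (LinearMap.snd R _ F₁ - h₂ ∘ₗ
      (h₁ ∘ₗ LinearMap.snd R _ F₁ - (LinearMap.ker g₂).subtype ∘ₗ LinearMap.fst R _ F₁))
      fun x => by simp [hh₁', hh₂']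
  exact Module.Projective.of_split i r (LinearMap.ext fun k => Subtype.ext (by simp [i, r]))

theorem ProjDimLE1.of_retract {X Y : Type u} [AddCommGroup X] [Module R X]
    [AddCommGroup Y] [Module R Y] (hY : ProjDimLE1 R Y) (r : Y →ₗ[R] X) (s : X →ₗ[R] Y)
    (hrs : r ∘ₗ s = LinearMap.id) : ProjDimLE1 R X := by
  obtain ⟨F, g, hF, hg, hK⟩ := hY
  have hrs' (x : X) : r (s x) = x := LinearMap.congr_fun hrs x
  let e := s ∘ₗ r
  -- `β (a, b) = e (g a) + (1 - e) (g b)` is a second presentation of `Y` by a projective, and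
  -- its kernel has `ker (r ∘ g) × 0` as a retract.
  let β : F × F →ₗ[R] Y := (e ∘ₗ g).coprod ((LinearMap.id - e) ∘ₗ g)
  have hβ : Surjective β := fun y => by
    obtain ⟨a, rfl⟩ := hg y
    exact ⟨(a, a), by simp [β]⟩
  have hrβ (x : F × F) : r (β x) = r (g x.1) := by simp [β, e, hrs']
  have : Module.Projective R (LinearMap.ker β) :=
    Module.Projective.ker_of_surjective_of_ker β g hβ hg
  refine ⟨F, r ∘ₗ g, hF, (Function.HasRightInverse.surjective ⟨s, hrs'⟩).comp hg, ?_⟩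
  exact Module.Projective.of_split
    ((LinearMap.inl R F F).restrict (q := LinearMap.ker β)
      fun a (ha : r (g a) = 0) => by simp [β, e, ha])
    ((LinearMap.fst R F F).restrict fun x (hx : β x = 0) => by simpa [hrβ] using congrArg r hx)
    (LinearMap.ext fun _ => rfl)

end Ring

theorem IsCover.isUnit_algebraMap_end_s13 {R : Type u} [CommRing R] {C : Set (ModuleCat.{u} R)}
    {P : ModuleCat.{u} R} {N : Type u} [AddCommGroup N] [Module R N] {φ : P →ₗ[R] N}
    (hφ : IsCover R C P N φ) {c : R} (hc : IsUnit (algebraMap R (Module.End R N) c)) :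
    IsUnit (algebraMap R (Module.End R P) c) := by
  obtain ⟨g, hg⟩ := hφ.2.1 P hφ.1 (↑hc.unit⁻¹ ∘ₗ φ)
  have hcg : φ ∘ₗ (algebraMap R (Module.End R P) c * g) = φ := by
    ext x
    have hgx : φ (g x) = (↑hc.unit⁻¹ : Module.End R N) (φ x) := LinearMap.congr_fun hg x
    have hinv := LinearMap.congr_fun hc.mul_val_inv (φ x)
    simp only [Module.End.mul_apply, Module.algebraMap_end_apply, Module.End.one_apply] at hinv
    simp [hgx, hinv]
  have : IsUnit (algebraMap R (Module.End R P) c * g) :=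
    (Module.End.isUnit_iff _).2 (hφ.2.2 _ hcg)
  exact ((Algebra.commute_algebraMap_left c g).isUnit_mul_iff.1 this).1

theorem IsLocalizedModule.comp_lift_eq_id {R : Type*} [CommRing R] (S : Submonoid R)
    {M N P : Type*} [AddCommMonoid M] [Module R M] [AddCommMonoid N] [Module R N]
    [AddCommMonoid P] [Module R P] (u : M →ₗ[R] N) [IsLocalizedModule S u]
    (φ : P →ₗ[R] N) (f : M →ₗ[R] P) (hf : φ ∘ₗ f = u)
    (hP : ∀ s : S, IsUnit (algebraMap R (Module.End R P) s)) :
    φ ∘ₗ IsLocalizedModule.lift S u f hP = LinearMap.id :=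
  IsLocalizedModule.linearMap_ext S u u <| by
    rw [LinearMap.comp_assoc, IsLocalizedModule.lift_comp, hf, LinearMap.id_comp]

/-- **Lemma 5.2(ii).** Let `R` be a commutative ring, `S` a multiplicative subset of `R`
and `M` an `R`-module of projective dimension at most 1. If `M ⊗_R R[S⁻¹]` has a
`𝒫₁(R)`-cover, then `p.dim_R (M ⊗_R R[S⁻¹]) ≤ 1`. -/
theorem pd_le_one_of_localized_module_has_P1_cover (R : Type u) [CommRing R]
    (S : Submonoid R) (M : Type u) [AddCommGroup M] [Module R M]
    (hM : ProjDimLE1 R M)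
    (h : ∃ (P : ModuleCat.{u} R) (φ : (P : Type u) →ₗ[R] TensorProduct R M (Localization S)),
      IsCover R (P1Class R) P (TensorProduct R M (Localization S)) φ) :
    ProjDimLE1 R (TensorProduct R M (Localization S)) := by
  obtain ⟨P, φ, hφ⟩ := h
  let u : M →ₗ[R] TensorProduct R M (Localization S) :=
    (TensorProduct.comm R (Localization S) M).toLinearMap ∘ₗ
      TensorProduct.mk R (Localization S) M 1
  obtain ⟨f, hf⟩ := hφ.2.1 (ModuleCat.of R M) hM u
  have hP (s : S) : IsUnit (algebraMap R (Module.End R P) s) :=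
    hφ.isUnit_algebraMap_end_s13 (IsLocalizedModule.map_units u s)
  exact ProjDimLE1.of_retract hφ.1 φ _ (IsLocalizedModule.comp_lift_eq_id S u φ f hf hP)
end
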